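/- Let H be a Hilbert space and suppose g : [0,1] → H satisfies the strong local nondeterminism asymptotics: for each i ≠ j, the normalized correlation ⟨Δg(t_j), Δg(t_i)⟩ / (‖Δg(t_j)‖ ‖Δg(t_i)‖) → 0 as t_{i+1} - t_i → 0, and ‖Δg(t₁)‖ → 0 as t₂ - t₁ → 0. Then for every h ∈ H, the projection P_{t₁t₂} h of h onto span{g(t₂) - g(t₁)} tends to 0 (weakly, i.e., ⟨g(t), g(t₂)-g(t₁)⟩/‖g(t₂)-g(t₁)‖ → 0 for each t) as t₂ - t₁ → 0. -/

import Mathlib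

/-!
Normalize the increments, `e n = Δₙ / ‖Δₙ‖`. Splitting a fixed increment `g s - g r` at the
endpoints of a shrinking interval `[uₙ, vₙ]` into two increments over disjoint intervals and a
middle piece that is small by uniform continuity shows `⟪e m, e n⟫ → 0` as `n → ∞` for each
fixed `m`. A bounded, asymptotically orthogonal sequence tends weakly to `0`: if
`⟪x, e n⟫ ≥ ε` infinitely often, one can pick `N` such indices with `|⟪e i, e j⟫| < δ` for
distinct ones, and then `N ε ≤ ⟪x, ∑ e⟫ ≤ ‖x‖ (N C² + N² δ)^{1/2}` (where `‖e n‖ ≤ C`) fails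
for large `N` once `δ ≪ ε² / ‖x‖²`.
-/

open Filter Finset
open scoped RealInnerProductSpace Topology

theorem tendsto_nhds_of_eq_off_of_seq_tendsto {ι α : Type*} [TopologicalSpace α] {l : Filter ι}
    [l.IsCountablyGenerated] {f : ι → α} {a : α} {p : ι → Prop}
    (hf : ∀ i, ¬ p i → f i = a)
    (hp : ∀ ns : ℕ → ι, Tendsto ns atTop l → (∀ k, p (ns k)) →
      Tendsto (f ∘ ns) atTop (𝓝 a)) :
    Tendsto f l (𝓝 a) := by
  refine tendsto_of_subseq_tendsto fun ns hns => ?_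
  by_cases hfr : ∃ᶠ k in atTop, p (ns k)
  · obtain ⟨φ, hφ, hpφ⟩ := extraction_of_frequently_atTop hfr
    exact ⟨φ, hp (ns ∘ φ) (hns.comp hφ.tendsto_atTop) hpφ⟩
  · refine ⟨id, tendsto_const_nhds.congr' ?_⟩
    filter_upwards [not_frequently.1 hfr] with k hk
    exact (hf _ hk).symm

theorem UniformContinuousOn.tendsto_dist_comp {X Y ι : Type*} [PseudoMetricSpace X]
    [PseudoMetricSpace Y] {f : X → Y} {s : Set X} (hf : UniformContinuousOn f s) {l : Filter ι}
    {x y : ι → X} (hx : ∀ i, x i ∈ s) (hy : ∀ i, y i ∈ s)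
    (hxy : Tendsto (fun i => dist (x i) (y i)) l (𝓝 0)) :
    Tendsto (fun i => dist (f (x i)) (f (y i))) l (𝓝 0) := by
  have hxy' : Tendsto (fun i => (x i, y i)) l (uniformity X ⊓ 𝓟 (s ×ˢ s)) :=
    tendsto_inf.2 ⟨tendsto_uniformity_iff_dist_tendsto_zero.2 hxy,
      tendsto_principal.2 (Eventually.of_forall fun i => ⟨hx i, hy i⟩)⟩
  exact tendsto_uniformity_iff_dist_tendsto_zero.1 (Tendsto.comp hf hxy')

theorem exists_finset_card_eq_pairwise_of_frequently {p : ℕ → Prop} {r : ℕ → ℕ → Prop}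
    (hr : ∀ i j, r i j → r j i) (hp : ∃ᶠ k in atTop, p k) (hev : ∀ m, ∀ᶠ k in atTop, r m k)
    (N : ℕ) :
    ∃ s : Finset ℕ, #s = N ∧ (∀ i ∈ s, p i) ∧ (s : Set ℕ).Pairwise r := by
  induction N with
  | zero => exact ⟨∅, by simp⟩
  | succ N ih =>
    obtain ⟨s, hcard, hps, hpair⟩ := ih
    obtain ⟨k, hpk, hsk, hrk⟩ := (hp.and_eventually ((eventually_gt_atTop (s.sup id)).and
      ((s.eventually_all).2 fun m _ => hev m))).exists
    have hks : k ∉ s := fun hk => (Finset.le_sup (f := id) hk).not_gt hsk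
    refine ⟨insert k s, by rw [card_insert_of_notMem hks, hcard], ?_, ?_⟩
    · exact forall_mem_insert _ _ _ |>.2 ⟨hpk, hps⟩
    · rw [coe_insert, Set.pairwise_insert]
      exact ⟨hpair, fun m hm _ => ⟨hr _ _ (hrk m hm), hrk m hm⟩⟩

section InnerProductSpace

variable {H : Type*} [NormedAddCommGroup H] [InnerProductSpace ℝ H]

theorem real_inner_div_norm_eq_mul_norm (x y : H) :
    ⟪x, y⟫ / ‖y‖ = ⟪x, y⟫ / (‖x‖ * ‖y‖) * ‖x‖ := by
  rcases eq_or_ne x 0 with rfl | hx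
  · simp
  · field_simp [norm_ne_zero_iff.2 hx]

theorem norm_real_inner_div_norm_le (x y : H) : ‖⟪x, y⟫ / ‖y‖‖ ≤ ‖x‖ := by
  rcases eq_or_ne y 0 with rfl | hy
  · simp
  · rw [Real.norm_eq_abs, abs_div, abs_norm, div_le_iff₀ (norm_pos_iff.2 hy)]
    exact abs_real_inner_le_norm x y

theorem norm_sum_sq_le_of_pairwise_inner_le {ι : Type*} (s : Finset ι) (v : ι → H) {C δ : ℝ}
    (hv : ∀ i ∈ s, ‖v i‖ ≤ C) (hδ : 0 ≤ δ)
    (hpair : (s : Set ι).Pairwise fun i j => ⟪v i, v j⟫ ≤ δ) :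
    ‖∑ i ∈ s, v i‖ ^ 2 ≤ #s * C ^ 2 + #s ^ 2 * δ := by
  classical
  have hterm : ∀ i ∈ s, ∀ j ∈ s, ⟪v i, v j⟫ ≤ (if i = j then C ^ 2 else 0) + δ := by
    intro i hi j hj
    by_cases hij : i = j
    · subst hij
      rw [if_pos rfl, real_inner_self_eq_norm_sq]
      nlinarith [hv i hi, norm_nonneg (v i)]
    · rw [if_neg hij, zero_add]
      exact hpair hi hj hij
  calc ‖∑ i ∈ s, v i‖ ^ 2 = ∑ i ∈ s, ∑ j ∈ s, ⟪v i, v j⟫ := by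
        rw [← real_inner_self_eq_norm_sq, sum_inner]
        simp only [inner_sum]
    _ ≤ ∑ i ∈ s, ∑ j ∈ s, ((if i = j then C ^ 2 else 0) + δ) :=
        sum_le_sum fun i hi => sum_le_sum fun j hj => hterm i hi j hj
    _ = #s * C ^ 2 + #s ^ 2 * δ := by
        simp only [sum_add_distrib, sum_ite_eq, sum_const, nsmul_eq_mul]
        rw [sum_ite_mem, inter_self, sum_const, nsmul_eq_mul]
        ring

variable {e : ℕ → H} {C : ℝ}

theorem not_frequently_le_inner_of_forall_tendsto_inner_zero (hC : ∀ k, ‖e k‖ ≤ C)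
    (horth : ∀ m, Tendsto (fun k => ⟪e m, e k⟫) atTop (𝓝 0)) (x : H) {ε : ℝ} (hε : 0 < ε) :
    ¬ ∃ᶠ k in atTop, ε ≤ ⟪x, e k⟫ := by
  intro hfr
  set δ := ε ^ 2 / (2 * (‖x‖ ^ 2 + 1))
  have hδ : 0 < δ := by positivity
  have hxδ : ‖x‖ ^ 2 * δ ≤ ε ^ 2 / 2 := by
    rw [mul_div_assoc', div_le_div_iff₀ (by positivity) two_pos]
    nlinarith [sq_nonneg ‖x‖, sq_nonneg ε]
  obtain ⟨N, hN⟩ := exists_nat_gt (2 * ‖x‖ ^ 2 * C ^ 2 / ε ^ 2)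
  rw [div_lt_iff₀ (by positivity)] at hN
  obtain ⟨s, hcard, hxs, hpair⟩ := exists_finset_card_eq_pairwise_of_frequently
    (r := fun i j => |⟪e i, e j⟫| < δ) (fun i j h => by rwa [real_inner_comm]) hfr
    (fun m => (horth m).abs.eventually (gt_mem_nhds (by simpa using hδ))) N
  set S := ∑ i ∈ s, e i
  have hlower : N * ε ≤ ‖x‖ * ‖S‖ :=
    calc (N : ℝ) * ε = ∑ _i ∈ s, ε := by rw [sum_const, hcard, nsmul_eq_mul]
      _ ≤ ⟪x, S⟫ := by rw [inner_sum]; exact sum_le_sum hxs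
      _ ≤ ‖x‖ * ‖S‖ := real_inner_le_norm _ _
  have hupper : ‖S‖ ^ 2 ≤ N * C ^ 2 + N ^ 2 * δ := by
    rw [← hcard]
    exact norm_sum_sq_le_of_pairwise_inner_le s e (fun i _ => hC i) hδ.le
      (hpair.mono' fun i j h => (le_abs_self _).trans h.le)
  have hsq : (N * ε) ^ 2 ≤ ‖x‖ ^ 2 * (N * C ^ 2 + N ^ 2 * δ) :=
    calc ((N : ℝ) * ε) ^ 2 ≤ (‖x‖ * ‖S‖) ^ 2 := by gcongr
      _ ≤ ‖x‖ ^ 2 * (N * C ^ 2 + N ^ 2 * δ) := by rw [mul_pow]; gcongr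
  have hNpos : (0 : ℝ) < N := by nlinarith [sq_nonneg ‖x‖, sq_nonneg C, sq_nonneg ε]
  nlinarith [mul_le_mul_of_nonneg_left hxδ (sq_nonneg (N : ℝ))]

theorem tendsto_inner_zero_of_forall_tendsto_inner_zero (hC : ∀ k, ‖e k‖ ≤ C)
    (horth : ∀ m, Tendsto (fun k => ⟪e m, e k⟫) atTop (𝓝 0)) (x : H) :
    Tendsto (fun k => ⟪x, e k⟫) atTop (𝓝 0) := by
  have hle := not_frequently_le_inner_of_forall_tendsto_inner_zero hC horth
  refine Metric.tendsto_nhds.2 fun ε hε => ?_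
  filter_upwards [not_frequently.1 (hle x hε), not_frequently.1 (hle (-x) hε)] with k hk hk'
  rw [inner_neg_left] at hk'
  rw [Real.dist_eq, sub_zero, abs_lt]
  constructor <;> linarith

end InnerProductSpace

section Increments

variable {H : Type*} [NormedAddCommGroup H] [InnerProductSpace ℝ H]

def HasAsymptoticallyUncorrelatedIncrements (g : ℝ → H) : Prop :=
  ∀ a b u v : ℕ → ℝ,
    (∀ n, 0 ≤ a n ∧ a n < b n ∧ b n ≤ 1) →
    (∀ n, 0 ≤ u n ∧ u n < v n ∧ v n ≤ 1) →
    (∀ n, b n ≤ u n ∨ v n ≤ a n) →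
    Tendsto (fun n => v n - u n) atTop (𝓝 0) →
    Tendsto (fun n =>
      ⟪g (b n) - g (a n), g (v n) - g (u n)⟫ /
        (‖g (b n) - g (a n)‖ * ‖g (v n) - g (u n)‖)) atTop (𝓝 0)

variable {g : ℝ → H} {a b u v : ℕ → ℝ}

theorem HasAsymptoticallyUncorrelatedIncrements.tendsto_inner_div_norm
    (hcorr : HasAsymptoticallyUncorrelatedIncrements g) (hg : ContinuousOn g (Set.Icc 0 1))
    (hab : ∀ n, 0 ≤ a n ∧ a n ≤ b n ∧ b n ≤ 1) (huv : ∀ n, 0 ≤ u n ∧ u n < v n ∧ v n ≤ 1)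
    (hdisj : ∀ n, a n < b n → b n ≤ u n ∨ v n ≤ a n)
    (hshrink : Tendsto (fun n => v n - u n) atTop (𝓝 0)) :
    Tendsto (fun n => ⟪g (b n) - g (a n), g (v n) - g (u n)⟫ / ‖g (v n) - g (u n)‖)
      atTop (𝓝 0) := by
  obtain ⟨C, hC⟩ := isCompact_Icc.exists_bound_of_continuousOn hg
  refine tendsto_nhds_of_eq_off_of_seq_tendsto (p := fun n => a n < b n) (fun n hn => ?_)
    fun φ hφ hφab => ?_
  · simp [le_antisymm (hab n).2.1 (not_lt.1 hn)]
  have hcorrφ := hcorr (a ∘ φ) (b ∘ φ) (u ∘ φ) (v ∘ φ)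
    (fun k => ⟨(hab _).1, hφab k, (hab _).2.2⟩) (fun k => huv _) (fun k => hdisj _ (hφab k))
    (hshrink.comp hφ)
  refine squeeze_zero_norm (fun k => ?_) (by simpa using hcorrφ.abs.mul_const (C + C))
  simp only [Function.comp_apply, Real.norm_eq_abs]
  rw [real_inner_div_norm_eq_mul_norm, abs_mul, abs_norm]
  refine mul_le_mul_of_nonneg_left ((norm_sub_le _ _).trans (add_le_add ?_ ?_)) (abs_nonneg _)
  · exact hC _ ⟨(hab _).1.trans (hab _).2.1, (hab _).2.2⟩
  · exact hC _ ⟨(hab _).1, (hab _).2.1.trans (hab _).2.2⟩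

theorem HasAsymptoticallyUncorrelatedIncrements.tendsto_inner_sub_div_norm
    (hcorr : HasAsymptoticallyUncorrelatedIncrements g) (hg : ContinuousOn g (Set.Icc 0 1))
    {r s : ℝ} (hr : 0 ≤ r) (hrs : r ≤ s) (hs : s ≤ 1)
    (huv : ∀ n, 0 ≤ u n ∧ u n < v n ∧ v n ≤ 1)
    (hshrink : Tendsto (fun n => v n - u n) atTop (𝓝 0)) :
    Tendsto (fun n => ⟪g s - g r, g (v n) - g (u n)⟫ / ‖g (v n) - g (u n)‖) atTop (𝓝 0) := by
  -- `g s - g r = (g s - g β) + (g β - g α) + (g α - g r)`, where `[r, α]` and `[β, s]` are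
  -- disjoint from `[u, v]` unless degenerate.
  set α : ℕ → ℝ := fun n => Set.projIcc r s hrs (u n)
  set β : ℕ → ℝ := fun n => Set.projIcc r s hrs (v n)
  have hα : ∀ n, α n ∈ Set.Icc r s := fun n => (Set.projIcc r s hrs (u n)).2
  have hβ : ∀ n, β n ∈ Set.Icc r s := fun n => (Set.projIcc r s hrs (v n)).2
  have hαu : ∀ n, r < α n → α n ≤ u n := fun n h => by
    simp only [α, Set.coe_projIcc, lt_max_iff, lt_irrefl, false_or, lt_min_iff] at h ⊢
    exact max_le h.2.le (min_le_right _ _)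
  have hvβ : ∀ n, β n < s → v n ≤ β n := fun n h => by
    simp only [β, Set.coe_projIcc, max_lt_iff, min_lt_iff, lt_irrefl, false_or] at h ⊢
    exact (min_eq_right h.2.le).ge.trans (le_max_right _ _)
  have hleft := hcorr.tendsto_inner_div_norm hg (a := fun _ => r) (b := α)
    (fun n => ⟨hr, (hα n).1, (hα n).2.trans hs⟩) huv (fun n hn => Or.inl (hαu n hn)) hshrink
  have hright := hcorr.tendsto_inner_div_norm hg (a := β) (b := fun _ => s)
    (fun n => ⟨hr.trans (hβ n).1, (hβ n).2, hs⟩) huv (fun n hn => Or.inr (hvβ n hn)) hshrink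
  have hmid : Tendsto (fun n => ‖g (β n) - g (α n)‖) atTop (𝓝 0) := by
    simp only [← dist_eq_norm]
    refine (isCompact_Icc.uniformContinuousOn_of_continuous hg).tendsto_dist_comp
      (fun n => ?_) (fun n => ?_) (squeeze_zero (fun _ => dist_nonneg) (fun n => ?_) hshrink)
    · exact ⟨hr.trans (hβ n).1, (hβ n).2.trans hs⟩
    · exact ⟨hr.trans (hα n).1, (hα n).2.trans hs⟩
    · exact (Set.abs_projIcc_sub_projIcc hrs).trans_eq (abs_of_pos (sub_pos.2 (huv n).2.1))
  have hmid' := squeeze_zero_norm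
    (fun n => norm_real_inner_div_norm_le _ (g (v n) - g (u n))) hmid
  simpa [← add_div, ← inner_add_left] using (hright.add hmid').add hleft

end Increments

theorem weak_convergence_of_projections_of_strong_local_nondeterminism
    {H : Type*} [NormedAddCommGroup H] [InnerProductSpace ℝ H]
    (g : ℝ → H) (hg : ContinuousOn g (Set.Icc 0 1))
    (hcorr : ∀ a b u v : ℕ → ℝ,
      (∀ n, 0 ≤ a n ∧ a n < b n ∧ b n ≤ 1) →
      (∀ n, 0 ≤ u n ∧ u n < v n ∧ v n ≤ 1) →
      (∀ n, b n ≤ u n ∨ v n ≤ a n) →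
      Tendsto (fun n => v n - u n) atTop (𝓝 0) →
      Tendsto (fun n =>
        ⟪g (b n) - g (a n), g (v n) - g (u n)⟫ /
          (‖g (b n) - g (a n)‖ * ‖g (v n) - g (u n)‖)) atTop (𝓝 0)) :
    ∀ t ∈ Set.Icc (0:ℝ) 1, ∀ u v : ℕ → ℝ,
      (∀ n, 0 ≤ u n ∧ u n < v n ∧ v n ≤ 1) →
      Tendsto (fun n => v n - u n) atTop (𝓝 0) →
      Tendsto (fun n => ⟪g t, g (v n) - g (u n)⟫ / ‖g (v n) - g (u n)‖) atTop (𝓝 0) := by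
  intro t _ u v huv hshrink
  set e : ℕ → H := fun n => ‖g (v n) - g (u n)‖⁻¹ • (g (v n) - g (u n))
  have he : ∀ n, ‖e n‖ ≤ 1 := fun n => by
    simpa [e, norm_smul] using inv_mul_le_one_of_le₀ le_rfl (norm_nonneg _)
  have hinner : ∀ x n, ⟪x, e n⟫ = ⟪x, g (v n) - g (u n)⟫ / ‖g (v n) - g (u n)‖ := fun x n => by
    rw [real_inner_smul_right, div_eq_inv_mul]
  have horth : ∀ m, Tendsto (fun n => ⟪e m, e n⟫) atTop (𝓝 0) := fun m => by
    have := (HasAsymptoticallyUncorrelatedIncrements.tendsto_inner_sub_div_norm hcorr hg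
      (huv m).1 (huv m).2.1.le (huv m).2.2 huv hshrink).const_mul ‖g (v m) - g (u m)‖⁻¹
    simpa [hinner, e, real_inner_smul_left, mul_div_assoc] using this
  simpa only [hinner] using tendsto_inner_zero_of_forall_tendsto_inner_zero he horth (g t)
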